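/- arXiv:2304.13171 — 4 statements merged into one kernel-verified Lean document; each statement's English description precedes it below -/
import Mathlib

section
/- Let φ(λ¹, λ²) = (1 − λ¹λ²)/(2 − λ¹ − λ²) on the bidisk. For every M > 0, the one-sided limit as t → 0⁺ of (φ(1 − t, 1 − tM) − 1)/t exists and equals −M/(M + 1). In particular, the directional derivative D_{−(1,M)}φ(1,1) is not constant in M and satisfies −D_{−(1,M)}φ(1,1) = M/(M+1) < 1 for all M > 0, with limit 1 as M → ∞. -/
/-!
Along the ray `t ↦ (1 - t, 1 - tM)` the function `φ(λ¹, λ²) = (1 - λ¹λ²) / (2 - λ¹ - λ²)` is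
affine: numerator and denominator share the factor `t`, leaving `φ(1 - t, 1 - tM) = 1 - t · M/(M + 1)`.
So the difference quotient is constant in `t`, and the rest is elementary facts about `M/(M + 1)`.
-/

open Filter Topology

section Ray

variable {K : Type*} [Field K]

theorem herve_phi_along_ray {t M : K} (ht : t ≠ 0) (hM : M + 1 ≠ 0) :
    (1 - (1 - t) * (1 - t * M)) / (2 - (1 - t) - (1 - t * M)) = 1 - t * (M / (M + 1)) := by
  have hden : 2 - (1 - t) - (1 - t * M) = t * (M + 1) := by ring
  rw [hden]
  field_simp
  ring

theorem herve_phi_differenceQuotient_along_ray {t M : K} (ht : t ≠ 0) (hM : M + 1 ≠ 0) :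
    ((1 - (1 - t) * (1 - t * M)) / (2 - (1 - t) - (1 - t * M)) - 1) / t = -(M / (M + 1)) := by
  rw [herve_phi_along_ray ht hM]
  field_simp
  ring

end Ray

section Ordered

variable {𝕜 : Type*} [Field 𝕜] [LinearOrder 𝕜] [IsStrictOrderedRing 𝕜]

theorem div_add_one_lt_one {M : 𝕜} (hM : 0 < M) : M / (M + 1) < 1 :=
  (div_lt_one (by linarith)).2 (lt_add_one M)

theorem div_add_one_injOn_Ioi : Set.InjOn (fun M : 𝕜 => M / (M + 1)) (Set.Ioi 0) := by
  intro M hM N hN h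
  have hM1 : M + 1 ≠ 0 := by simp only [Set.mem_Ioi] at hM; positivity
  have hN1 : N + 1 ≠ 0 := by simp only [Set.mem_Ioi] at hN; positivity
  simp only [div_eq_div_iff hM1 hN1] at h
  linarith

variable [TopologicalSpace 𝕜] [OrderTopology 𝕜]

theorem tendsto_div_add_const_atTop (c : 𝕜) :
    Tendsto (fun x : 𝕜 => x / (x + c)) atTop (𝓝 1) := by
  have hinv : Tendsto (fun x : 𝕜 => (x + c)⁻¹) atTop (𝓝 0) :=
    (tendsto_atTop_add_const_right _ c tendsto_id).inv_tendsto_atTop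
  have hlim : Tendsto (fun x : 𝕜 => 1 - c * (x + c)⁻¹) atTop (𝓝 1) := by
    simpa using tendsto_const_nhds.sub (tendsto_const_nhds.mul hinv)
  refine hlim.congr' ?_
  filter_upwards [eventually_gt_atTop (-c)] with x hx
  have hxc : x + c ≠ 0 := by linarith
  field_simp
  ring

end Ordered

/-- Directional derivatives of φ(λ¹,λ²) = (1 − λ¹λ²)/(2 − λ¹ − λ²) at (1,1) along (1,M). -/
theorem herve_example_directional_derivatives :
    (∀ M : ℝ, 0 < M →
      Tendsto (fun t : ℝ =>
          ((1 - (1 - (t : ℂ)) * (1 - (t : ℂ) * (M : ℂ))) /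
              (2 - (1 - (t : ℂ)) - (1 - (t : ℂ) * (M : ℂ))) - 1) / (t : ℂ))
        (nhdsWithin 0 (Set.Ioi 0)) (nhds (-(M / (M + 1) : ℝ) : ℂ))) ∧
    (¬ ∀ M N : ℝ, 0 < M → 0 < N → M / (M + 1) = N / (N + 1)) ∧
    (∀ M : ℝ, 0 < M → M / (M + 1) < 1) ∧
    Tendsto (fun M : ℝ => M / (M + 1)) atTop (nhds 1) := by
  refine ⟨fun M hM => ?_, fun h => ?_, fun M => div_add_one_lt_one,
    tendsto_div_add_const_atTop 1⟩
  · have hM1 : (M : ℂ) + 1 ≠ 0 := by exact_mod_cast (by linarith : M + 1 ≠ 0)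
    refine tendsto_const_nhds.congr' (eventually_nhdsWithin_of_forall fun t ht => ?_)
    have ht : (t : ℂ) ≠ 0 := Complex.ofReal_ne_zero.2 (ne_of_gt ht)
    dsimp only
    rw [herve_phi_differenceQuotient_along_ray ht hM1]
    push_cast
    rfl
  · have h12 : (1 : ℝ) = 2 := div_add_one_injOn_Ioi one_pos two_pos (h 1 2 one_pos two_pos)
    norm_num at h12
end

section
/- Let α > 0, M > 0, and let (r_n) be a decreasing sequence of positive reals with r_n → 0. Define R_n = α·max{r_n/(2 − r_n), r_n/(2 − M·r_n)} (for n large enough that 2 − M r_n > 0). Suppose φ : 𝔻² → 𝔻 and ω with |ω| = 1 satisfy |ω − φ(λ_n)| ≤ 2R_n/(R_n + 1) for λ_n = τ − r_n·(τ¹, τ²M) ∈ 𝔻², where τ = (τ¹, τ²) ∈ 𝕋². If M ≥ 1, then limsup_n (1 − |φ(λ_n)|)/(1 − ‖λ_n‖) ≤ α, where ‖λ_n‖ = max{|λ_n¹|, |λ_n²|} = 1 − r_n. -/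
/-!
Along the curve `λₙ = τ - rₙ (τ¹, M τ²)` with `M rₙ ≤ 1` the first coordinate dominates, so
`1 - ‖λₙ‖ = rₙ`, and the larger of the two weights is `rₙ / (2 - M rₙ)`, so that
`Rₙ = α rₙ / (2 - M rₙ)`. Since `|ω| = 1`, the horocycle condition gives
`1 - |φ(λₙ)| ≤ |ω - φ(λₙ)| ≤ 2Rₙ / (Rₙ + 1)`, and dividing by `rₙ` bounds the quotient by
`2α / (α rₙ + 2 - M rₙ)`, which tends to `α`.
-/

open Filter Topology

lemma norm_sub_ofReal_mul_self (τ : ℂ) (s : ℝ) : ‖τ - (s : ℂ) * τ‖ = |1 - s| * ‖τ‖ := by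
  rw [show τ - (s : ℂ) * τ = ((1 - s : ℝ) : ℂ) * τ by push_cast; ring, norm_mul,
    Complex.norm_real, Real.norm_eq_abs]

lemma max_norm_sub_ofReal_mul {τ1 τ2 : ℂ} (hτ1 : ‖τ1‖ = 1) (hτ2 : ‖τ2‖ = 1) {r M : ℝ}
    (hr : 0 ≤ r) (hM : 1 ≤ M) (hMr : M * r ≤ 1) :
    max ‖τ1 - (r : ℂ) * τ1‖ ‖τ2 - (r : ℂ) * (τ2 * (M : ℂ))‖ = 1 - r := by
  rw [show (r : ℂ) * (τ2 * (M : ℂ)) = ((M * r : ℝ) : ℂ) * τ2 by push_cast; ring,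
    norm_sub_ofReal_mul_self, norm_sub_ofReal_mul_self, hτ1, hτ2, mul_one, mul_one,
    abs_of_nonneg (by nlinarith), abs_of_nonneg (by linarith)]
  exact max_eq_left (by nlinarith)

lemma max_div_two_sub_eq {r M : ℝ} (hr : 0 ≤ r) (hM : 1 ≤ M) (hMr : 0 < 2 - M * r) :
    max (r / (2 - r)) (r / (2 - M * r)) = r / (2 - M * r) :=
  max_eq_right (div_le_div_of_nonneg_left hr hMr (by nlinarith))

lemma horocycle_radius_div_eq {α r s : ℝ} (hα : 0 ≤ α) (hr : 0 < r) (hs : 0 < s) :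
    2 * (α * (r / s)) / (α * (r / s) + 1) / r = 2 * α / (α * r + s) := by
  have : 0 < α * r / s + 1 := by positivity
  field_simp

lemma tendsto_two_mul_div_add_sub_mul {ι : Type*} {l : Filter ι} {r : ι → ℝ}
    (hr : Tendsto r l (𝓝 0)) (α M : ℝ) :
    Tendsto (fun i => 2 * α / (α * r i + (2 - M * r i))) l (𝓝 α) := by
  have hden : Tendsto (fun i => α * r i + (2 - M * r i)) l (𝓝 2) := by
    simpa using (hr.const_mul α).add (tendsto_const_nhds.sub (hr.const_mul M))
  convert (tendsto_const_nhds (x := 2 * α)).div hden two_ne_zero using 2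
  · rfl
  · ring

lemma limsup_le_of_eventually_le_of_tendsto {ι : Type*} {l : Filter ι} [l.NeBot]
    {f g : ι → ℝ} {a : ℝ} (hf : 0 ≤ᶠ[l] f) (hfg : f ≤ᶠ[l] g) (hg : Tendsto g l (𝓝 a)) :
    limsup f l ≤ a :=
  (limsup_le_limsup hfg (isCoboundedUnder_le_of_eventually_le l hf)
    hg.isBoundedUnder_le).trans_eq hg.limsup_eq

theorem weighted_julia_limsup_general
    (α M : ℝ) (hα : 0 < α) (hM : 1 ≤ M)
    (r : ℕ → ℝ) (hrpos : ∀ n, 0 < r n)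
    (hr0 : Tendsto r atTop (nhds 0))
    (τ1 τ2 : ℂ) (hτ1 : ‖τ1‖ = 1) (hτ2 : ‖τ2‖ = 1)
    (ω : ℂ) (hω : ‖ω‖ = 1)
    (φ : ℂ × ℂ → ℂ)
    (hφ : ∀ z : ℂ × ℂ, ‖z.1‖ < 1 → ‖z.2‖ < 1 →
      ‖φ z‖ < 1)
    (lam : ℕ → ℂ × ℂ)
    (hlam : ∀ n, lam n = (τ1 - (r n : ℂ) * τ1, τ2 - (r n : ℂ) * (τ2 * (M : ℂ))))
    (R : ℕ → ℝ)
    (hR : ∀ n, R n = α * max (r n / (2 - r n)) (r n / (2 - M * r n)))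
    (hmem : ∀ᶠ n in atTop,
      ‖(lam n).1‖ < 1 ∧ ‖(lam n).2‖ < 1 ∧ 2 - M * r n > 0)
    (hbound : ∀ᶠ n in atTop, ‖ω - φ (lam n)‖ ≤ 2 * R n / (R n + 1)) :
    Filter.limsup (fun n =>
        (1 - ‖φ (lam n)‖) /
          (1 - max ‖(lam n).1‖ ‖(lam n).2‖)) atTop ≤ α := by
  have hsmall : ∀ᶠ n in atTop, M * r n ≤ 1 := by
    have hMr0 : Tendsto (fun n => M * r n) atTop (𝓝 0) := by simpa using hr0.const_mul M
    exact hMr0.eventually_le_const one_pos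
  have hden : ∀ n, M * r n ≤ 1 → 1 - max ‖(lam n).1‖ ‖(lam n).2‖ = r n := fun n hs => by
    rw [hlam, max_norm_sub_ofReal_mul hτ1 hτ2 (hrpos n).le hM hs]; ring
  refine limsup_le_of_eventually_le_of_tendsto ?_ ?_ (tendsto_two_mul_div_add_sub_mul hr0 α M)
  · filter_upwards [hmem, hsmall] with n ⟨hlam1, hlam2, _⟩ hs
    rw [hden n hs]
    exact div_nonneg (sub_nonneg.2 (hφ _ hlam1 hlam2).le) (hrpos n).le
  · filter_upwards [hmem, hbound, hsmall] with n ⟨_, _, hMr⟩ hb hs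
    have hnum : 1 - ‖φ (lam n)‖ ≤ 2 * R n / (R n + 1) := by
      simpa [hω] using (norm_sub_norm_le ω (φ (lam n))).trans hb
    rw [hden n hs, ← horocycle_radius_div_eq hα.le (hrpos n) hMr,
      ← max_div_two_sub_eq (hrpos n).le hM hMr, ← hR]
    exact div_le_div_of_nonneg_right hnum (hrpos n).le

/-- Quantitative limsup computation in the proof of the weighted Julia inequality
(Theorem 3.9, (iii) ⇒ (i)), case M ≥ 1. -/
theorem weighted_julia_limsup
    (α M : ℝ) (hα : 0 < α) (hM : 1 ≤ M)
    (r : ℕ → ℝ) (hrpos : ∀ n, 0 < r n) (hrdec : StrictAnti r)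
    (hr0 : Tendsto r atTop (nhds 0))
    (τ1 τ2 : ℂ) (hτ1 : ‖τ1‖ = 1) (hτ2 : ‖τ2‖ = 1)
    (ω : ℂ) (hω : ‖ω‖ = 1)
    (φ : ℂ × ℂ → ℂ)
    (hφ : ∀ z : ℂ × ℂ, ‖z.1‖ < 1 → ‖z.2‖ < 1 →
      ‖φ z‖ < 1)
    (lam : ℕ → ℂ × ℂ)
    (hlam : ∀ n, lam n = (τ1 - (r n : ℂ) * τ1, τ2 - (r n : ℂ) * (τ2 * (M : ℂ))))
    (R : ℕ → ℝ)
    (hR : ∀ n, R n = α * max (r n / (2 - r n)) (r n / (2 - M * r n)))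
    (hmem : ∀ᶠ n in atTop,
      ‖(lam n).1‖ < 1 ∧ ‖(lam n).2‖ < 1 ∧ 2 - M * r n > 0)
    (hbound : ∀ᶠ n in atTop, ‖ω - φ (lam n)‖ ≤ 2 * R n / (R n + 1)) :
    Filter.limsup (fun n =>
        (1 - ‖φ (lam n)‖) /
          (1 - max ‖(lam n).1‖ ‖(lam n).2‖)) atTop ≤ α :=
  weighted_julia_limsup_general α M hα hM r hrpos hr0 τ1 τ2 hτ1 hτ2 ω hω φ hφ lam hlam R hR hmem
    hbound
end

section
/- Define φ(λ¹, λ²) = −(3λ¹λ² − λ¹ − λ² − 1)/(3 − λ¹ − λ² − λ¹λ²) on the open bidisk 𝔻². Then the denominator never vanishes on 𝔻², φ maps 𝔻² into 𝔻, the slice z ↦ φ(z, 0) equals (z + 1)/(3 − z), and for every M > 0 the limit as t → 0⁺ of (φ(1 − t, 1 − tM) − 1)/t equals −M/(M + 1). -/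
/-!
Write `φ = N / D`. The identity
`|D|² = |N|² + 4((1 - |λ¹|²)|1 - λ²|² + (1 - |λ²|²)|1 - λ¹|²)`
makes `|D|² - |N|²` positive on the bidisk, giving both `D ≠ 0` and `|φ| < 1`.
Along `(1 - t, 1 - tM)` one has `D = t(2 + 2M - tM)` and `N - D = -2Mt²`, so
`(φ - 1)/t = -2M/(2 + 2M - tM) → -M/(M + 1)`.
-/

open Filter Topology

noncomputable def phi (a b : ℂ) : ℂ := -(3 * a * b - a - b - 1) / (3 - a - b - a * b)

lemma normSq_phi_den_eq (a b : ℂ) :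
    Complex.normSq (3 - a - b - a * b) =
      Complex.normSq (-(3 * a * b - a - b - 1)) +
        4 * ((1 - Complex.normSq a) * Complex.normSq (1 - b) +
          (1 - Complex.normSq b) * Complex.normSq (1 - a)) := by
  simp only [Complex.normSq_apply, Complex.sub_re, Complex.sub_im, Complex.mul_re,
    Complex.mul_im, Complex.neg_re, Complex.neg_im, Complex.one_re, Complex.one_im,
    Complex.re_ofNat, Complex.im_ofNat]
  ring

lemma normSq_phi_num_lt_normSq_phi_den {a b : ℂ} (ha : ‖a‖ < 1) (hb : ‖b‖ < 1) :
    Complex.normSq (-(3 * a * b - a - b - 1)) < Complex.normSq (3 - a - b - a * b) := by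
  have ha' : Complex.normSq a < 1 := by rw [← Complex.sq_norm]; nlinarith [norm_nonneg a]
  have hb' : Complex.normSq b < 1 := by rw [← Complex.sq_norm]; nlinarith [norm_nonneg b]
  have h1a : 0 < Complex.normSq (1 - a) := by
    rw [Complex.normSq_pos, sub_ne_zero]
    rintro rfl
    simp at ha
  have h1b : 0 ≤ Complex.normSq (1 - b) := Complex.normSq_nonneg _
  rw [normSq_phi_den_eq]
  nlinarith [mul_pos (sub_pos.mpr hb') h1a, mul_nonneg (sub_pos.mpr ha').le h1b]

lemma phi_den_ne_zero {a b : ℂ} (ha : ‖a‖ < 1) (hb : ‖b‖ < 1) : 3 - a - b - a * b ≠ 0 := by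
  rw [← Complex.normSq_pos]
  exact (Complex.normSq_nonneg _).trans_lt (normSq_phi_num_lt_normSq_phi_den ha hb)

lemma norm_phi_lt_one {a b : ℂ} (ha : ‖a‖ < 1) (hb : ‖b‖ < 1) : ‖phi a b‖ < 1 := by
  rw [phi, norm_div, div_lt_one (norm_pos_iff.mpr (phi_den_ne_zero ha hb)),
    Complex.norm_def, Complex.norm_def]
  exact Real.sqrt_lt_sqrt (Complex.normSq_nonneg _) (normSq_phi_num_lt_normSq_phi_den ha hb)

lemma phi_zero_right (z : ℂ) : phi z 0 = (z + 1) / (3 - z) := by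
  rw [phi]; ring

lemma phi_one_sub_sub_one_div {t M : ℂ} (ht : t ≠ 0) (hM : 2 + 2 * M - t * M ≠ 0) :
    (phi (1 - t) (1 - t * M) - 1) / t = -2 * M / (2 + 2 * M - t * M) := by
  have hden : 3 - (1 - t) - (1 - t * M) - (1 - t) * (1 - t * M) = t * (2 + 2 * M - t * M) := by
    ring
  rw [phi, hden, div_sub_one (mul_ne_zero ht hM), div_div,
    div_eq_div_iff (mul_ne_zero (mul_ne_zero ht hM) ht) hM]
  ring

lemma tendsto_phi_one_sub_sub_one_div {M : ℂ} (hM : M + 1 ≠ 0) :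
    Tendsto (fun t : ℝ => (phi (1 - t) (1 - t * M) - 1) / t) (𝓝[≠] 0) (𝓝 (-M / (M + 1))) := by
  have h2M : 2 + 2 * M ≠ 0 := by
    rw [show 2 + 2 * M = 2 * (M + 1) by ring]; exact mul_ne_zero two_ne_zero hM
  have hden : Tendsto (fun t : ℝ => 2 + 2 * M - t * M) (𝓝[≠] 0) (𝓝 (2 + 2 * M)) := by
    have hc : Continuous fun t : ℝ => 2 + 2 * M - t * M := by fun_prop
    simpa using (hc.tendsto 0).mono_left nhdsWithin_le_nhds
  have hlim : -M / (M + 1) = -2 * M / (2 + 2 * M) := by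
    rw [div_eq_div_iff hM h2M]
    ring
  rw [hlim]
  refine (tendsto_const_nhds.div hden h2M).congr' ?_
  filter_upwards [self_mem_nhdsWithin, hden.eventually_ne h2M] with t ht htM
  exact (phi_one_sub_sub_one_div (Complex.ofReal_ne_zero.mpr ht) htM).symm

/-- Example 5.5: φ(λ¹,λ²) = −(3λ¹λ² − λ¹ − λ² − 1)/(3 − λ¹ − λ² − λ¹λ²). -/
theorem sola_tully_example :
    (∀ l1 l2 : ℂ, ‖l1‖ < 1 → ‖l2‖ < 1 →
      (3 - l1 - l2 - l1 * l2 ≠ 0 ∧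
        ‖(-(3 * l1 * l2 - l1 - l2 - 1) / (3 - l1 - l2 - l1 * l2))‖ < 1)) ∧
    (∀ z : ℂ, ‖z‖ < 1 →
      -(3 * z * 0 - z - 0 - 1) / (3 - z - 0 - z * 0) = (z + 1) / (3 - z)) ∧
    (∀ M : ℝ, 0 < M →
      Tendsto (fun t : ℝ =>
          (-(3 * (1 - (t : ℂ)) * (1 - (t : ℂ) * (M : ℂ)) - (1 - (t : ℂ)) -
                (1 - (t : ℂ) * (M : ℂ)) - 1) /
              (3 - (1 - (t : ℂ)) - (1 - (t : ℂ) * (M : ℂ)) -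
                (1 - (t : ℂ)) * (1 - (t : ℂ) * (M : ℂ))) - 1) / (t : ℂ))
        (nhdsWithin 0 (Set.Ioi 0)) (nhds (-(M / (M + 1) : ℝ) : ℂ))) := by
  refine ⟨fun l1 l2 h1 h2 => ⟨phi_den_ne_zero h1 h2, norm_phi_lt_one h1 h2⟩,
    fun z _ => phi_zero_right z, fun M hM => ?_⟩
  have hM1 : (M : ℂ) + 1 ≠ 0 := by exact_mod_cast (by linarith : M + 1 ≠ 0)
  have hlim : -((M / (M + 1) : ℝ) : ℂ) = -M / (M + 1) := by push_cast; ring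
  rw [hlim]
  exact (tendsto_phi_one_sub_sub_one_div hM1).mono_left (nhdsGT_le_nhdsNE 0)
end

section
/- Let H¹, H² be complex Hilbert spaces and for each M > 0 let x(M) = (x¹(M), x²(M)) ∈ H¹ × H² be vectors satisfying, for all M, N > 0, the identity ⟨x¹(M), x¹(N)⟩ + M⟨x²(M), x²(N)⟩ = ‖x¹(M)‖² + M‖x²(M)‖². Define K(M) = ‖x¹(M)‖² + M‖x²(M)‖². Then K is nondecreasing on (0, ∞), and if K(M) = K(N) for some 0 < M < N, then x(M) = x(N) and x²(M) = 0. -/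
/-!
Write `K_M(v) = ‖v₁‖² + M‖v₂‖²` and `a = x(M)`, `b = x(N)`. Expanding the squares, the cross
identity says exactly that
`K_N(b) - K_M(a) = ‖b₁ - a₁‖² + M‖b₂ - a₂‖² + (N - M)‖b₂‖²`,
a sum of nonnegative terms when `0 < M ≤ N`. If `K_M(a) = K_N(b)` with `M < N`, each term vanishes.
-/

open RCLike
open scoped InnerProductSpace

/-- The quantity `K(M)` of the paper, evaluated at `v = x(M)`. -/
def weightedNormSq {E F : Type*} [Norm E] [Norm F] (M : ℝ) (v : E × F) : ℝ :=
  ‖v.1‖ ^ 2 + M * ‖v.2‖ ^ 2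

section WeightedNormSq

variable {𝕜 E F : Type*} [RCLike 𝕜] [NormedAddCommGroup E] [InnerProductSpace 𝕜 E]
  [NormedAddCommGroup F] [InnerProductSpace 𝕜 F] {a b : E × F} {M N : ℝ}

theorem weightedNormSq_nonneg (hM : 0 ≤ M) (v : E × F) : 0 ≤ weightedNormSq M v := by
  unfold weightedNormSq
  positivity

theorem weightedNormSq_eq_zero_iff (hM : 0 < M) {v : E × F} : weightedNormSq M v = 0 ↔ v = 0 := by
  unfold weightedNormSq
  rw [add_eq_zero_iff_of_nonneg (by positivity) (by positivity), mul_eq_zero_iff_left hM.ne',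
    sq_eq_zero_iff, sq_eq_zero_iff, norm_eq_zero, norm_eq_zero, Prod.ext_iff]
  rfl

include 𝕜 in
theorem weightedNormSq_sub_weightedNormSq
    (hab : re ⟪b.1, a.1⟫_𝕜 + M * re ⟪b.2, a.2⟫_𝕜 = weightedNormSq M a) (N : ℝ) :
    weightedNormSq N b - weightedNormSq M a
      = weightedNormSq M (b - a) + (N - M) * ‖b.2‖ ^ 2 := by
  unfold weightedNormSq at *
  rw [Prod.fst_sub, Prod.snd_sub, @norm_sub_sq 𝕜, @norm_sub_sq 𝕜]
  linear_combination 2 * hab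

include 𝕜 in
theorem weightedNormSq_le_of_re_inner_eq
    (hab : re ⟪b.1, a.1⟫_𝕜 + M * re ⟪b.2, a.2⟫_𝕜 = weightedNormSq M a)
    (hM : 0 ≤ M) (hMN : M ≤ N) :
    weightedNormSq M a ≤ weightedNormSq N b := by
  have hdiff := weightedNormSq_sub_weightedNormSq hab N
  have hsq : 0 ≤ (N - M) * ‖b.2‖ ^ 2 := mul_nonneg (sub_nonneg.2 hMN) (sq_nonneg _)
  linarith [weightedNormSq_nonneg hM (b - a)]

include 𝕜 in
theorem eq_and_snd_eq_zero_of_weightedNormSq_eq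
    (hab : re ⟪b.1, a.1⟫_𝕜 + M * re ⟪b.2, a.2⟫_𝕜 = weightedNormSq M a)
    (hM : 0 < M) (hMN : M < N) (heq : weightedNormSq M a = weightedNormSq N b) :
    a = b ∧ a.2 = 0 := by
  have hdiff := weightedNormSq_sub_weightedNormSq hab N
  rw [← heq, sub_self, eq_comm, add_eq_zero_iff_of_nonneg (weightedNormSq_nonneg hM.le _)
    (mul_nonneg (sub_nonneg.2 hMN.le) (sq_nonneg _)), weightedNormSq_eq_zero_iff hM, sub_eq_zero,
    mul_eq_zero_iff_left (sub_ne_zero.2 hMN.ne'), sq_eq_zero_iff, norm_eq_zero] at hdiff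
  obtain ⟨rfl, hb⟩ := hdiff
  exact ⟨rfl, hb⟩

end WeightedNormSq

/-- Abstract content of Proposition 3.4: monotonicity of K(M) and rigidity of equality. -/
theorem K_nondecreasing_and_rigid
    {H1 H2 : Type*} [NormedAddCommGroup H1] [InnerProductSpace ℂ H1]
    [NormedAddCommGroup H2] [InnerProductSpace ℂ H2]
    (x : ℝ → H1 × H2)
    (h : ∀ M N : ℝ, 0 < M → 0 < N →
      (inner ℂ ((x N).1) ((x M).1) : ℂ) + (M : ℂ) * (inner ℂ ((x N).2) ((x M).2) : ℂ)
        = ((‖(x M).1‖ ^ 2 + M * ‖(x M).2‖ ^ 2 : ℝ) : ℂ)) :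
    (∀ M N : ℝ, 0 < M → M ≤ N →
      ‖(x M).1‖ ^ 2 + M * ‖(x M).2‖ ^ 2 ≤ ‖(x N).1‖ ^ 2 + N * ‖(x N).2‖ ^ 2) ∧
    (∀ M N : ℝ, 0 < M → M < N →
      ‖(x M).1‖ ^ 2 + M * ‖(x M).2‖ ^ 2 = ‖(x N).1‖ ^ 2 + N * ‖(x N).2‖ ^ 2 →
      x M = x N ∧ (x M).2 = 0) := by
  have hre : ∀ M N : ℝ, 0 < M → 0 < N →
      re ⟪(x N).1, (x M).1⟫_ℂ + M * re ⟪(x N).2, (x M).2⟫_ℂ = weightedNormSq M (x M) :=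
    fun M N hM hN => by
      have hre_MN := congrArg Complex.re (h M N hM hN)
      simp only [Complex.add_re, Complex.re_ofReal_mul, Complex.ofReal_re] at hre_MN
      exact hre_MN
  exact ⟨fun M N hM hMN =>
      weightedNormSq_le_of_re_inner_eq (hre M N hM (hM.trans_le hMN)) hM.le hMN,
    fun M N hM hMN =>
      eq_and_snd_eq_zero_of_weightedNormSq_eq (hre M N hM (hM.trans hMN)) hM hMN⟩
end
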